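/- arXiv:2501.11399 — 3 statements merged into one kernel-verified Lean document; each statement's English description precedes it below -/
import Mathlib

section
/- With notation as in the previous statement (pᵢ = 1 case), the subgroup Z generated by z̃₁,…,z̃ₙ has rank n and λ restricted to Z × Z is trivial; hence the maximal rank of a subgroup of A on which λ is trivial is exactly n. -/
/-! Since no `qᵢ` is torsion, some additive map `f : Kˣ → ℚ` has `f qᵢ ≠ 0` for all `i`
(a functional on `ℚ ⊗ Kˣ` avoiding finitely many hyperplanes). Then `f ∘ λ` is a `ℤ`-bilinear,
`ℚ`-valued form on `ℤ²ⁿ` with Gram matrix `[[0, S], [-Sᵀ, *]]`, where `S` is lower triangular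
with diagonal `f qᵢ`; so it is nondegenerate over `ℚ`. An isotropic subgroup of rank `r` spans
an isotropic `ℚ`-subspace of dimension `r`, hence `2r ≤ 2n`, and the span of the `z̃ᵢ` attains
`r = n`. -/

section

open Module Submodule

theorem exists_addMonoidHom_rat_ne_zero {G ι : Type*} [AddCommGroup G] [Finite ι]
    (g : ι → G) (hg : ∀ i, ¬IsOfFinAddOrder (g i)) : ∃ f : G →+ ℚ, ∀ i, f (g i) ≠ 0 := by
  have hne : ∀ i, TensorProduct.mk ℤ ℚ G 1 (g i) ≠ 0 := by
    intro i h
    obtain ⟨⟨s, hs⟩, hsg⟩ := (IsLocalizedModule.eq_zero_iff (nonZeroDivisors ℤ) _).mp h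
    exact hg i (isOfFinAddOrder_iff_zsmul_eq_zero.mpr ⟨s, nonZeroDivisors.ne_zero hs, hsg⟩)
  obtain ⟨f, hf⟩ := Module.exists_dual_forall_apply_ne_zero (K := ℚ) _ hne
  exact ⟨((f.restrictScalars ℤ).comp (TensorProduct.mk ℤ ℚ G 1)).toAddMonoidHom, hf⟩

theorem Matrix.det_fromBlocks_zero₁₁_ne_zero {R n : Type*} [CommRing R] [NoZeroDivisors R]
    [Fintype n] [DecidableEq n] {B C D : Matrix n n R} (hB : B.det ≠ 0) (hC : C.det ≠ 0) :
    (Matrix.fromBlocks 0 B C D).det ≠ 0 := by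
  have h := det_permute' (Equiv.sumComm n n) (Matrix.fromBlocks 0 B C D)
  rw [Equiv.sumComm_apply, fromBlocks_submatrix_sum_swap_right, submatrix_id_id,
    det_fromBlocks_zero₁₂] at h
  intro h0
  rw [h0, mul_zero] at h
  exact mul_ne_zero hB hC h

theorem LinearMap.apply_eq_zero_of_mem_span {R M N P : Type*} [CommSemiring R]
    [AddCommMonoid M] [AddCommMonoid N] [AddCommMonoid P] [Module R M] [Module R N] [Module R P]
    (β : M →ₗ[R] N →ₗ[R] P) {s : Set M} {t : Set N} (h : ∀ x ∈ s, ∀ y ∈ t, β x y = 0)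
    {x : M} (hx : x ∈ span R s) {y : N} (hy : y ∈ span R t) : β x y = 0 := by
  have hs : ∀ x ∈ s, span R t ≤ ker (β x) := fun x hx => span_le.mpr fun y hy => h x hx y hy
  exact (span_le.mpr fun x hx => hs x hx hy : span R s ≤ ker (β.flip y)) hx

section RatGram

variable {ι A : Type*} [Fintype ι] [AddCommGroup A]

noncomputable def Module.Basis.ratCoords (b : Basis ι ℤ A) : A →ₗ[ℤ] ι → ℚ :=
  LinearMap.compLeft (Int.castAddHom ℚ).toIntLinearMap ι ∘ₗ b.equivFun.toLinearMap

theorem Module.Basis.ratCoords_injective (b : Basis ι ℤ A) : Function.Injective b.ratCoords :=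
  (Function.Injective.comp_left Int.cast_injective).comp b.equivFun.injective

noncomputable def Module.Basis.ratGram (b : Basis ι ℤ A) (β : A →ₗ[ℤ] A →ₗ[ℤ] ℚ) : Matrix ι ι ℚ :=
  Matrix.of fun i j => β (b i) (b j)

theorem Module.Basis.toBilin'_ratGram [DecidableEq ι] (b : Basis ι ℤ A)
    (β : A →ₗ[ℤ] A →ₗ[ℤ] ℚ) (v w : A) :
    (b.ratGram β).toBilin' (b.ratCoords v) (b.ratCoords w) = β v w := by
  rw [← LinearMap.sum_repr_mul_repr_mul b b v w (B := β), Matrix.toBilin'_apply]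
  simp [ratCoords, ratGram, Finsupp.sum_fintype, mul_comm, mul_left_comm]

theorem LinearMap.BilinForm.two_mul_finrank_le_of_le_orthogonal {K V : Type*} [Field K]
    [AddCommGroup V] [Module K V] [FiniteDimensional K V] {B : LinearMap.BilinForm K V}
    (hB : B.Nondegenerate) {W : Submodule K V} (hW : W ≤ B.orthogonal W) :
    2 * finrank K W ≤ finrank K V := by
  have := Submodule.finrank_mono hW
  rw [finrank_orthogonal hB] at this
  have := W.finrank_le
  omega

theorem Module.Basis.two_mul_finrank_le_of_isotropic [DecidableEq ι] (b : Basis ι ℤ A)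
    {β : A →ₗ[ℤ] A →ₗ[ℤ] ℚ} (hβ : (b.ratGram β).det ≠ 0) {N : Submodule ℤ A}
    (hN : ∀ v ∈ N, ∀ w ∈ N, β v w = 0) : 2 * finrank ℤ N ≤ Fintype.card ι := by
  obtain ⟨m, bN⟩ := Submodule.basisOfPid b N
  let u : Fin m → ι → ℚ := fun k => b.ratCoords (bN k)
  have hu : LinearIndependent ℚ u :=
    (LinearIndependent.iff_fractionRing ℤ ℚ).mp <|
      (bN.linearIndependent.map' N.subtype N.ker_subtype).map' _
        (LinearMap.ker_eq_bot.mpr b.ratCoords_injective)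
  have hiso : span ℚ (Set.range u) ≤ (b.ratGram β).toBilin'.orthogonal (span ℚ (Set.range u)) :=
    fun y hy x hx => LinearMap.apply_eq_zero_of_mem_span _ (by
      rintro _ ⟨k, rfl⟩ _ ⟨l, rfl⟩
      exact (b.toBilin'_ratGram β _ _).trans (hN _ (bN k).2 _ (bN l).2)) hx hy
  have := LinearMap.BilinForm.two_mul_finrank_le_of_le_orthogonal
    ((LinearMap.BilinForm.nondegenerate_toBilin'_iff_det_ne_zero).mpr hβ) hiso
  rw [finrank_span_eq_card hu, Fintype.card_fin, finrank_fintype_fun_eq_card] at this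
  rwa [finrank_eq_card_basis bN, Fintype.card_fin]

end RatGram

section Bimultiplicative

variable {A G : Type*} [AddCommGroup A] [CommGroup G] {lam : A → A → G}

theorem map_add_left_of_skew (hbil : ∀ a b c, lam a (b + c) = lam a b * lam a c)
    (hskew : ∀ a b, lam b a = (lam a b)⁻¹) (a b c : A) : lam (a + b) c = lam a c * lam b c := by
  rw [hskew c, hbil, mul_inv, ← hskew, ← hskew]

def intBilinOfBimultiplicative (hbil : ∀ a b c, lam a (b + c) = lam a b * lam a c)
    (hskew : ∀ a b, lam b a = (lam a b)⁻¹) : A →ₗ[ℤ] A →ₗ[ℤ] Additive G :=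
  have hl := map_add_left_of_skew hbil hskew
  LinearMap.mk₂ ℤ (fun v w => Additive.ofMul (lam v w)) (fun a b c => congrArg _ (hl a b c))
    (fun k a c => (AddMonoidHom.mk' (fun v => Additive.ofMul (lam v c)) (hl · · c)).map_zsmul k a)
    (fun a b c => congrArg _ (hbil a b c))
    (fun k a c => (AddMonoidHom.mk' (fun w => Additive.ofMul (lam a w)) (hbil a)).map_zsmul k c)

@[simp]
theorem intBilinOfBimultiplicative_apply (hbil : ∀ a b c, lam a (b + c) = lam a b * lam a c)
    (hskew : ∀ a b, lam b a = (lam a b)⁻¹) (v w : A) :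
    intBilinOfBimultiplicative hbil hskew v w = Additive.ofMul (lam v w) :=
  rfl

theorem eq_one_of_mem_closure (hbil : ∀ a b c, lam a (b + c) = lam a b * lam a c)
    (hskew : ∀ a b, lam b a = (lam a b)⁻¹) {s : Set A} (h : ∀ x ∈ s, ∀ y ∈ s, lam x y = 1)
    {x y : A} (hx : x ∈ AddSubgroup.closure s) (hy : y ∈ AddSubgroup.closure s) : lam x y = 1 := by
  rw [← span_int_eq_addSubgroupClosure] at hx hy
  simpa using LinearMap.apply_eq_zero_of_mem_span (intBilinOfBimultiplicative hbil hskew)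
    (by simpa using h) hx hy

end Bimultiplicative

section Lattice

variable {n : ℕ} {G : Type*} [CommGroup G]

noncomputable def zyBasis (n : ℕ) : Basis (Fin n ⊕ Fin n) ℤ ((Fin n → ℤ) × (Fin n → ℤ)) :=
  (Pi.basisFun ℤ (Fin n)).prod (Pi.basisFun ℤ (Fin n))

@[simp]
theorem zyBasis_inl (i : Fin n) : zyBasis n (Sum.inl i) = (Pi.single i 1, 0) := by
  ext <;> simp [zyBasis]

@[simp]
theorem zyBasis_inr (i : Fin n) : zyBasis n (Sum.inr i) = (0, Pi.single i 1) := by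
  ext <;> simp [zyBasis]

theorem finrank_closure_single_zero (n : ℕ) :
    finrank ℤ (AddSubgroup.toIntSubmodule (AddSubgroup.closure
      {v | ∃ i : Fin n, v = ((Pi.single i 1 : Fin n → ℤ), (0 : Fin n → ℤ))})) = n := by
  have hgen : {v | ∃ i : Fin n, v = ((Pi.single i 1 : Fin n → ℤ), (0 : Fin n → ℤ))} =
      Set.range (zyBasis n ∘ Sum.inl) := by
    ext v
    simp [eq_comm]
  rw [AddSubgroup.toIntSubmodule_closure, hgen,
    finrank_span_eq_card ((zyBasis n).linearIndependent.comp _ Sum.inl_injective), Fintype.card_fin]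

theorem det_ratGram_zyBasis_ne_zero (q : Fin n → G)
    {lam : ((Fin n → ℤ) × (Fin n → ℤ)) → ((Fin n → ℤ) × (Fin n → ℤ)) → G}
    (hbil : ∀ a b c, lam a (b + c) = lam a b * lam a c)
    (hskew : ∀ a b, lam b a = (lam a b)⁻¹)
    (hzz : ∀ i j : Fin n, lam (Pi.single i 1, 0) (Pi.single j 1, 0) = 1)
    (hzy : ∀ i j : Fin n,
      lam (Pi.single j 1, 0) (0, Pi.single i 1) = if i ≤ j then q i else 1)
    {f : Additive G →+ ℚ} (hf : ∀ i, f (Additive.ofMul (q i)) ≠ 0) :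
    ((zyBasis n).ratGram
      ((intBilinOfBimultiplicative hbil hskew).compr₂ f.toIntLinearMap)).det ≠ 0 := by
  set S : Matrix (Fin n) (Fin n) ℚ := Matrix.of fun j i => if i ≤ j then f (.ofMul (q i)) else 0
  have hS : S.det ≠ 0 := by
    rw [Matrix.det_of_isLowerTriangular S fun j i (hij : j < i) => if_neg (not_le.mpr hij)]
    exact Finset.prod_ne_zero_iff.mpr fun i _ => by simpa [S] using hf i
  have hgram : (zyBasis n).ratGram ((intBilinOfBimultiplicative hbil hskew).compr₂
      f.toIntLinearMap) = Matrix.fromBlocks 0 S (-S.transpose)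
        (Matrix.of fun i j => f (.ofMul (lam (0, Pi.single i 1) (0, Pi.single j 1)))) := by
    ext (i | i) (j | j)
    · simp [Module.Basis.ratGram, hzz]
    · by_cases h : j ≤ i <;> simp [Module.Basis.ratGram, S, hzy, h]
    · by_cases h : i ≤ j <;> simp [Module.Basis.ratGram, S, hskew (Pi.single j 1, 0), hzy, h]
    · simp [Module.Basis.ratGram]
  rw [hgram]
  refine Matrix.det_fromBlocks_zero₁₁_ne_zero hS ?_
  rw [Matrix.det_neg, Matrix.det_transpose]
  exact mul_ne_zero (pow_ne_zero _ (neg_ne_zero.mpr one_ne_zero)) hS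

end Lattice

end

theorem isotropic_max_rank_pi_one_general
    (K : Type*) [Field K] (n : ℕ)
    (q : Fin n → Kˣ)
    (hq : ∀ i, ∀ k : ℤ, k ≠ 0 → (q i) ^ k ≠ 1)
    (lam : ((Fin n → ℤ) × (Fin n → ℤ)) → ((Fin n → ℤ) × (Fin n → ℤ)) → Kˣ)
    (hbil : ∀ a b c, lam a (b + c) = lam a b * lam a c)
    (hskew : ∀ a b, lam b a = (lam a b)⁻¹)
    (hzz : ∀ i j : Fin n, lam (Pi.single i 1, 0) (Pi.single j 1, 0) = 1)
    (hzy : ∀ i j : Fin n,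
      lam (Pi.single j 1, 0) (0, Pi.single i 1) = if i ≤ j then q i else 1) :
    (Module.finrank ℤ (AddSubgroup.toIntSubmodule
        (AddSubgroup.closure {v | ∃ i : Fin n, v = ((Pi.single i 1 : Fin n → ℤ), (0 : Fin n → ℤ))})) = n ∧
      ∀ b ∈ AddSubgroup.closure {v | ∃ i : Fin n, v = ((Pi.single i 1 : Fin n → ℤ), (0 : Fin n → ℤ))},
        ∀ b' ∈ AddSubgroup.closure {v | ∃ i : Fin n, v = ((Pi.single i 1 : Fin n → ℤ), (0 : Fin n → ℤ))},
          lam b b' = 1) ∧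
    IsGreatest {r : ℕ | ∃ B : AddSubgroup ((Fin n → ℤ) × (Fin n → ℤ)),
      (∀ b ∈ B, ∀ b' ∈ B, lam b b' = 1) ∧
      Module.finrank ℤ (AddSubgroup.toIntSubmodule B) = r} n := by
  set Z := AddSubgroup.closure
    {v | ∃ i : Fin n, v = ((Pi.single i 1 : Fin n → ℤ), (0 : Fin n → ℤ))}
  have hZiso : ∀ b ∈ Z, ∀ b' ∈ Z, lam b b' = 1 :=
    fun b hb b' hb' => eq_one_of_mem_closure hbil hskew
      (by rintro _ ⟨i, rfl⟩ _ ⟨j, rfl⟩; exact hzz i j) hb hb'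
  refine ⟨⟨finrank_closure_single_zero n, hZiso⟩, ⟨Z, hZiso, finrank_closure_single_zero n⟩, ?_⟩
  rintro r ⟨B, hB, rfl⟩
  obtain ⟨f, hf⟩ := exists_addMonoidHom_rat_ne_zero (fun i => Additive.ofMul (q i)) fun i h =>
    have ⟨k, hk, hqk⟩ := isOfFinOrder_iff_zpow_eq_one.mp (isOfFinAddOrder_ofMul_iff.mp h)
    hq i k hk hqk
  have hrank := (zyBasis n).two_mul_finrank_le_of_isotropic
    (det_ratGram_zyBasis_ne_zero q hbil hskew hzz hzy hf) (N := AddSubgroup.toIntSubmodule B)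
    fun v hv w hw => by simp [hB v hv w hw]
  simp only [Fintype.card_sum, Fintype.card_fin] at hrank
  omega

/-- Case `pᵢ = 1`: the subgroup `Z` generated by `z̃₁,…,z̃ₙ` has rank `n` and `λ` is
trivial on it; hence the maximal rank of a subgroup of `A` on which `λ` is trivial is
exactly `n`. -/
theorem isotropic_max_rank_pi_one
    (K : Type*) [Field K] (n : ℕ)
    (q : Fin n → Kˣ) (γ : Fin n → Fin n → Kˣ)
    (hq : ∀ i, ∀ k : ℤ, k ≠ 0 → (q i) ^ k ≠ 1)
    (lam : ((Fin n → ℤ) × (Fin n → ℤ)) → ((Fin n → ℤ) × (Fin n → ℤ)) → Kˣ)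
    (hbil : ∀ a b c, lam a (b + c) = lam a b * lam a c)
    (hskew : ∀ a b, lam b a = (lam a b)⁻¹)
    (hzz : ∀ i j : Fin n, lam (Pi.single i 1, 0) (Pi.single j 1, 0) = 1)
    (hzy : ∀ i j : Fin n,
      lam (Pi.single j 1, 0) (0, Pi.single i 1) = if i ≤ j then q i else 1)
    (hyy : ∀ i j : Fin n, lam (0, Pi.single i 1) (0, Pi.single j 1) = γ i j) :
    (Module.finrank ℤ (AddSubgroup.toIntSubmodule
        (AddSubgroup.closure {v | ∃ i : Fin n, v = ((Pi.single i 1 : Fin n → ℤ), (0 : Fin n → ℤ))})) = n ∧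
      ∀ b ∈ AddSubgroup.closure {v | ∃ i : Fin n, v = ((Pi.single i 1 : Fin n → ℤ), (0 : Fin n → ℤ))},
        ∀ b' ∈ AddSubgroup.closure {v | ∃ i : Fin n, v = ((Pi.single i 1 : Fin n → ℤ), (0 : Fin n → ℤ))},
          lam b b' = 1) ∧
    IsGreatest {r : ℕ | ∃ B : AddSubgroup ((Fin n → ℤ) × (Fin n → ℤ)),
      (∀ b ∈ B, ∀ b' ∈ B, lam b b' = 1) ∧
      Module.finrank ℤ (AddSubgroup.toIntSubmodule B) = r} n :=
  isotropic_max_rank_pi_one_general K n q hq lam hbil hskew hzz hzy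
end

section
/- Let R be a ring, M a right R-module, and x, y, c ∈ R satisfying x^k y = q^k y x^k + κ c x^{k-1} for some unit c of R and nonzero scalar κ in a central field K (where q, p ∈ K*, p ≠ q and q^k ≠ p^k for all k ≥ 1, κ = (q^k − p^k)/(q − p)·p^{1−k}). If m ∈ M satisfies m y = 0 and m x^k = 0, then m x^{k-1} = 0. Consequently, no nonzero element of M can be simultaneously torsion for both x and y at minimal exponents, i.e. a nonzero module over such a ring cannot be both {x^j}-torsion and {y^j}-torsion. -/
/-!
Apply `x^k y = q^k y x^k + κ_k z x^{k-1}` to `m`: the left side and the first term on the right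
vanish, leaving `κ_k · m z x^{k-1} = 0` with `κ_k = (q^k - p^k)/(q - p) ≠ 0`. Moving `z` to the
right costs only the nonzero scalar `p^{-(k-1)}`, and `z` is a unit, so `m x^{k-1} = 0`.
-/

open MulOpposite

lemma mul_pow_eq_smul_pow_mul_of_mul_eq_smul {K R : Type*} [CommSemiring K] [Semiring R]
    [Algebra K R] {c : K} {x z : R} (h : z * x = c • (x * z)) (n : ℕ) :
    z * x ^ n = c ^ n • (x ^ n * z) := by
  induction n with
  | zero => simp
  | succ n ih =>
    rw [pow_succ, ← mul_assoc, ih, smul_mul_assoc, mul_assoc, h, mul_smul_comm, ← mul_assoc,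
      ← pow_succ, smul_smul, ← pow_succ]

section RightModule

variable {R M : Type*} [Ring R] [AddCommGroup M] [Module Rᵐᵒᵖ M]

lemma op_mul_isUnit_smul_eq_zero_iff {a u : R} (hu : IsUnit u) {m : M} :
    op (a * u) • m = 0 ↔ op a • m = 0 := by
  rw [op_mul, mul_smul, hu.op.smul_eq_zero]

lemma op_smul_smul_eq_zero_iff {K : Type*} [Field K] [Algebra K R] {c : K} (hc : c ≠ 0) {a : R}
    {m : M} : op (c • a) • m = 0 ↔ op a • m = 0 := by
  rw [op_smul, Algebra.smul_def, mul_smul,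
    ((isUnit_iff_ne_zero.mpr hc).map (algebraMap K Rᵐᵒᵖ)).smul_eq_zero]

end RightModule

open MulOpposite in
theorem torsion_step_general
    (K : Type*) [Field K] (R : Type*) [Ring R] [Algebra K R]
    (M : Type*) [AddCommGroup M] [Module Rᵐᵒᵖ M]
    (p q : K) (hp : p ≠ 0)
    (hpq : ∀ k : ℕ, 1 ≤ k → q ^ k ≠ p ^ k)
    (x y z : R) (hz : IsUnit z)
    (hzx : z * x = p⁻¹ • (x * z))
    (hform : ∀ k : ℕ, 1 ≤ k →
      x ^ k * y = q ^ k • (y * x ^ k) + ((q ^ k - p ^ k) / (q - p)) • (z * x ^ (k - 1)))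
    (k : ℕ) (hk : 1 ≤ k) (m : M)
    (hmy : op y • m = 0) (hmx : op (x ^ k) • m = 0) :
    op (x ^ (k - 1)) • m = 0 := by
  have hqp : q ≠ p := fun h => hpq 1 le_rfl (by rw [h])
  have hκ : (q ^ k - p ^ k) / (q - p) ≠ 0 :=
    div_ne_zero (sub_ne_zero.mpr (hpq k hk)) (sub_ne_zero.mpr hqp)
  have hxy : op (x ^ k * y) • m = 0 := by rw [op_mul, mul_smul, hmx, smul_zero]
  rw [hform k hk, op_add, add_smul, op_smul, op_mul, ← smul_mul_assoc, mul_smul, hmy, smul_zero,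
    zero_add, op_smul_smul_eq_zero_iff hκ, mul_pow_eq_smul_pow_mul_of_mul_eq_smul hzx,
    op_smul_smul_eq_zero_iff (pow_ne_zero _ (inv_ne_zero hp))] at hxy
  exact (op_mul_isUnit_smul_eq_zero_iff hz).mp hxy

open MulOpposite in
/-- If `x^k y = q^k y x^k + ((q^k − p^k)/(q − p)) z x^{k−1}` with `z` invertible,
`z x = p⁻¹ x z`, and `q^k ≠ p^k` for all `k ≥ 1`, then a right-module element `m`
with `m y = 0` and `m x^k = 0` satisfies `m x^{k−1} = 0`. -/
theorem torsion_step
    (K : Type*) [Field K] (R : Type*) [Ring R] [Algebra K R]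
    (M : Type*) [AddCommGroup M] [Module Rᵐᵒᵖ M]
    (p q : K) (hp : p ≠ 0) (hq : q ≠ 0)
    (hpq : ∀ k : ℕ, 1 ≤ k → q ^ k ≠ p ^ k)
    (x y z : R) (hz : IsUnit z)
    (hzx : z * x = p⁻¹ • (x * z))
    (hform : ∀ k : ℕ, 1 ≤ k →
      x ^ k * y = q ^ k • (y * x ^ k) + ((q ^ k - p ^ k) / (q - p)) • (z * x ^ (k - 1)))
    (k : ℕ) (hk : 1 ≤ k) (m : M)
    (hmy : op y • m = 0) (hmx : op (x ^ k) • m = 0) :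
    op (x ^ (k - 1)) • m = 0 :=
  torsion_step_general K R M p q hp hpq x y z hz hzx hform k hk m hmy hmx
end

section
/- For the algebra K_n = K_{n,Γ}^{P,Q}(K), the elements z_i = Σ_{l ≤ i} (q_l − p_l) y_l x_l satisfy z_i z_j = z_j z_i for all i, j; z_j y_i = p_i y_i z_j for j < i and z_j y_i = q_i y_i z_j for j ≥ i; and z_j x_i = p_i^{-1} x_i z_j for j < i and z_j x_i = q_i^{-1} x_i z_j for j ≥ i. In particular each z_i is a normal element of K_n. -/
/-!
Call `a` `α`-skew-commuting with `b` when `a * b = α • (b * a)`; this is stable under linear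
combinations in `a` and multiplicative in each argument. By the defining relations, the monomial
`y_l x_l` skew-commutes with `y_i` by `p_i` if `l < i` and by `q_i` if `l > i`, and with `x_i` by
the inverse scalars; summing settles the case `j < i`. For `i ≤ j` write
`z_j = (x_i y_i - p_i y_i x_i) + Σ_{i<l≤j} (q_l - p_l) y_l x_l`: the diagonal relation
`x_i y_i = q_i y_i x_i + z_{i-1}`, with `z_{i-1}` already skew-commuting with `y_i` and `x_i` by
`p_i^{±1}`, makes the first summand skew-commute with `y_i` by `q_i` and with `x_i` by `q_i⁻¹`.
Since `z_j` skew-commutes with `y_l` and `x_l` by mutually inverse scalars, it commutes with every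
`y_l x_l`, hence with every `z_i`.
-/

def SkewCommute {R A : Type*} [Mul A] [SMul R A] (α : R) (a b : A) : Prop :=
  a * b = α • (b * a)

namespace SkewCommute

section Semiring

variable {R A : Type*} [CommSemiring R] [Semiring A] [Algebra R A] {α β : R} {a b c : A}

theorem zero_left (α : R) (b : A) : SkewCommute α 0 b := by
  simp [SkewCommute]

theorem add_left (ha : SkewCommute α a c) (hb : SkewCommute α b c) :
    SkewCommute α (a + b) c := by
  rw [SkewCommute, add_mul, mul_add, smul_add, ha, hb]

theorem smul_left (r : R) (h : SkewCommute α a b) : SkewCommute α (r • a) b := by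
  rw [SkewCommute, smul_mul_assoc, mul_smul_comm, h, smul_comm]

theorem sum_left {ι : Type*} (s : Finset ι) {f : ι → A} (h : ∀ i ∈ s, SkewCommute α (f i) b) :
    SkewCommute α (∑ i ∈ s, f i) b :=
  Finset.sum_induction f (SkewCommute α · b) (fun _ _ => add_left) (zero_left α b) h

theorem mul_left (ha : SkewCommute α a c) (hb : SkewCommute β b c) :
    SkewCommute (α * β) (a * b) c := by
  rw [SkewCommute, mul_assoc, hb, mul_smul_comm, ← mul_assoc, ha, smul_mul_assoc, smul_smul,
    mul_comm β, mul_assoc]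

theorem mul_right (hb : SkewCommute α a b) (hc : SkewCommute β a c) :
    SkewCommute (α * β) a (b * c) := by
  rw [SkewCommute, ← mul_assoc, hb, smul_mul_assoc, mul_assoc, hc, mul_smul_comm, smul_smul,
    ← mul_assoc]

theorem one_iff : SkewCommute (1 : R) a b ↔ Commute a b := by
  rw [SkewCommute, one_smul]; rfl

end Semiring

section Semifield

variable {K A : Type*} [Semifield K] [Semiring A] [Algebra K A] {α : K} {a b c : A}

theorem symm (hα : α ≠ 0) (h : SkewCommute α a b) : SkewCommute α⁻¹ b a := by
  rw [SkewCommute, h, smul_smul, inv_mul_cancel₀ hα, one_smul]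

theorem commute_mul (hα : α ≠ 0) (hb : SkewCommute α a b) (hc : SkewCommute α⁻¹ a c) :
    Commute a (b * c) :=
  one_iff.1 (by simpa [hα] using hb.mul_right hc)

end Semifield

end SkewCommute

section

variable {R K A : Type*} [Ring A] {a b w : A}

theorem skewCommute_mul_sub_smul_mul_right [CommRing R] [Algebra R A] {p q : R}
    (hab : a * b = q • (b * a) + w) (hw : SkewCommute p w b) :
    SkewCommute q (a * b - p • (b * a)) b := by
  have habb : a * b * b = q • (b * a * b) + p • (b * w) := by
    rw [hab, add_mul, hw, smul_mul_assoc]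
  have hbab : b * (a * b) = q • (b * (b * a)) + b * w := by rw [hab, mul_add, mul_smul_comm]
  rw [SkewCommute, sub_mul, mul_sub, smul_mul_assoc, mul_smul_comm, habb, mul_assoc b a b, hbab]
  module

theorem skewCommute_mul_sub_smul_mul_left [Field K] [Algebra K A] {p q : K}
    (hq : q ≠ 0) (hp : p ≠ 0) (hab : a * b = q • (b * a) + w) (hw : SkewCommute p⁻¹ w a) :
    SkewCommute q⁻¹ (a * b - p • (b * a)) a := by
  have haab : a * (a * b) = q • (a * (b * a)) + p • (w * a) := by
    rw [hab, mul_add, mul_smul_comm, hw, smul_smul, mul_inv_cancel₀ hp, one_smul]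
  have haba : a * b * a = q • (b * a * a) + w * a := by rw [hab, add_mul, smul_mul_assoc]
  rw [SkewCommute, eq_inv_smul_iff₀ hq, sub_mul, mul_sub, smul_mul_assoc, mul_smul_comm, haab,
    ← mul_assoc a b a, haba]
  module

end

namespace Kn

variable {K : Type*} [Field K] {A : Type*} [Ring A] [Algebra K A] {n : ℕ}
  {p q : Fin n → Kˣ} {γ : Fin n → Fin n → Kˣ} {x y : Fin n → A}

def z (p q : Fin n → Kˣ) (x y : Fin n → A) (j : Fin n) : A :=
  ∑ l ∈ Finset.Iic j, ((q l : K) - (p l : K)) • (y l * x l)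

theorem yx_skewCommute_y_of_lt
    (hyy : ∀ i j, i < j → y i * y j = ((γ i j : K)) • (y j * y i))
    (hxylt : ∀ i j, i < j → x i * y j = ((p j : K) * ((γ i j : Kˣ)⁻¹ : Kˣ)) • (y j * x i))
    {l i : Fin n} (h : l < i) : SkewCommute (p i : K) (y l * x l) (y i) := by
  convert SkewCommute.mul_left (hyy l i h) (hxylt l i h) using 1
  simp [mul_left_comm]

theorem yx_skewCommute_y_of_gt (hγanti : ∀ i j, γ i j * γ j i = 1)
    (hyy : ∀ i j, i < j → y i * y j = ((γ i j : K)) • (y j * y i))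
    (hxygt : ∀ i j, j < i → x i * y j = ((q j : K) * ((γ i j : Kˣ)⁻¹ : Kˣ)) • (y j * x i))
    {l i : Fin n} (h : i < l) : SkewCommute (q i : K) (y l * x l) (y i) := by
  convert SkewCommute.mul_left (SkewCommute.symm (γ i l).ne_zero (hyy i l h)) (hxygt l i h) using 1
  rw [eq_inv_of_mul_eq_one_right (hγanti i l)]
  simp [mul_left_comm]

theorem yx_skewCommute_x_of_lt (hγanti : ∀ i j, γ i j * γ j i = 1)
    (hxx : ∀ i j, i < j → x i * x j = ((q i : K) * ((p j : Kˣ)⁻¹ : Kˣ) * γ i j) • (x j * x i))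
    (hxygt : ∀ i j, j < i → x i * y j = ((q j : K) * ((γ i j : Kˣ)⁻¹ : Kˣ)) • (y j * x i))
    {l i : Fin n} (h : l < i) : SkewCommute (p i : K)⁻¹ (y l * x l) (x i) := by
  convert SkewCommute.mul_left (SkewCommute.symm (by simp) (hxygt i l h)) (hxx l i h) using 1
  rw [eq_inv_of_mul_eq_one_right (hγanti i l)]
  simp only [Units.val_inv_eq_inv_val]
  field_simp

theorem yx_skewCommute_x_of_gt
    (hxx : ∀ i j, i < j → x i * x j = ((q i : K) * ((p j : Kˣ)⁻¹ : Kˣ) * γ i j) • (x j * x i))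
    (hxylt : ∀ i j, i < j → x i * y j = ((p j : K) * ((γ i j : Kˣ)⁻¹ : Kˣ)) • (y j * x i))
    {l i : Fin n} (h : i < l) : SkewCommute (q i : K)⁻¹ (y l * x l) (x i) := by
  convert SkewCommute.mul_left (SkewCommute.symm (by simp) (hxylt i l h))
    (SkewCommute.symm (by simp) (hxx i l h)) using 1
  simp only [Units.val_inv_eq_inv_val]
  field_simp

theorem z_skewCommute_y_of_lt
    (hyy : ∀ i j, i < j → y i * y j = ((γ i j : K)) • (y j * y i))
    (hxylt : ∀ i j, i < j → x i * y j = ((p j : K) * ((γ i j : Kˣ)⁻¹ : Kˣ)) • (y j * x i))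
    {i j : Fin n} (h : j < i) : SkewCommute (p i : K) (z p q x y j) (y i) :=
  SkewCommute.sum_left _ fun _ hl =>
    (yx_skewCommute_y_of_lt hyy hxylt ((Finset.mem_Iic.1 hl).trans_lt h)).smul_left _

theorem z_skewCommute_x_of_lt (hγanti : ∀ i j, γ i j * γ j i = 1)
    (hxx : ∀ i j, i < j → x i * x j = ((q i : K) * ((p j : Kˣ)⁻¹ : Kˣ) * γ i j) • (x j * x i))
    (hxygt : ∀ i j, j < i → x i * y j = ((q j : K) * ((γ i j : Kˣ)⁻¹ : Kˣ)) • (y j * x i))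
    {i j : Fin n} (h : j < i) : SkewCommute (p i : K)⁻¹ (z p q x y j) (x i) :=
  SkewCommute.sum_left _ fun _ hl =>
    (yx_skewCommute_x_of_lt hγanti hxx hxygt ((Finset.mem_Iic.1 hl).trans_lt h)).smul_left _

theorem z_eq_add_of_le
    (hdiag : ∀ i, x i * y i - (q i : K) • (y i * x i) =
      ∑ l ∈ Finset.Iio i, ((q l : K) - (p l : K)) • (y l * x l))
    {i j : Fin n} (h : i ≤ j) :
    z p q x y j = (x i * y i - (p i : K) • (y i * x i)) +
      ∑ l ∈ Finset.Ioc i j, ((q l : K) - (p l : K)) • (y l * x l) := by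
  rw [z, ← Finset.Iic_union_Ioc_eq_Iic h, Finset.sum_union (Finset.Iic_disjoint_Ioc le_rfl),
    Finset.Iic_eq_cons_Iio, Finset.sum_cons, ← hdiag i]
  module

theorem z_skewCommute_y_of_le (hγanti : ∀ i j, γ i j * γ j i = 1)
    (hyy : ∀ i j, i < j → y i * y j = ((γ i j : K)) • (y j * y i))
    (hxylt : ∀ i j, i < j → x i * y j = ((p j : K) * ((γ i j : Kˣ)⁻¹ : Kˣ)) • (y j * x i))
    (hxygt : ∀ i j, j < i → x i * y j = ((q j : K) * ((γ i j : Kˣ)⁻¹ : Kˣ)) • (y j * x i))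
    (hdiag : ∀ i, x i * y i - (q i : K) • (y i * x i) =
      ∑ l ∈ Finset.Iio i, ((q l : K) - (p l : K)) • (y l * x l))
    {i j : Fin n} (h : i ≤ j) : SkewCommute (q i : K) (z p q x y j) (y i) := by
  rw [z_eq_add_of_le hdiag h]
  refine .add_left (skewCommute_mul_sub_smul_mul_right (sub_eq_iff_eq_add'.1 (hdiag i)) ?_) ?_
  · exact SkewCommute.sum_left _ fun _ hl =>
      (yx_skewCommute_y_of_lt hyy hxylt (Finset.mem_Iio.1 hl)).smul_left _
  · exact SkewCommute.sum_left _ fun _ hl =>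
      (yx_skewCommute_y_of_gt hγanti hyy hxygt (Finset.mem_Ioc.1 hl).1).smul_left _

theorem z_skewCommute_x_of_le (hγanti : ∀ i j, γ i j * γ j i = 1)
    (hxx : ∀ i j, i < j → x i * x j = ((q i : K) * ((p j : Kˣ)⁻¹ : Kˣ) * γ i j) • (x j * x i))
    (hxylt : ∀ i j, i < j → x i * y j = ((p j : K) * ((γ i j : Kˣ)⁻¹ : Kˣ)) • (y j * x i))
    (hxygt : ∀ i j, j < i → x i * y j = ((q j : K) * ((γ i j : Kˣ)⁻¹ : Kˣ)) • (y j * x i))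
    (hdiag : ∀ i, x i * y i - (q i : K) • (y i * x i) =
      ∑ l ∈ Finset.Iio i, ((q l : K) - (p l : K)) • (y l * x l))
    {i j : Fin n} (h : i ≤ j) : SkewCommute (q i : K)⁻¹ (z p q x y j) (x i) := by
  rw [z_eq_add_of_le hdiag h]
  refine .add_left (skewCommute_mul_sub_smul_mul_left (q i).ne_zero (p i).ne_zero
    (sub_eq_iff_eq_add'.1 (hdiag i)) ?_) ?_
  · exact SkewCommute.sum_left _ fun _ hl =>
      (yx_skewCommute_x_of_lt hγanti hxx hxygt (Finset.mem_Iio.1 hl)).smul_left _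
  · exact SkewCommute.sum_left _ fun _ hl =>
      (yx_skewCommute_x_of_gt hxx hxylt (Finset.mem_Ioc.1 hl).1).smul_left _

theorem z_commute (hγanti : ∀ i j, γ i j * γ j i = 1)
    (hxx : ∀ i j, i < j → x i * x j = ((q i : K) * ((p j : Kˣ)⁻¹ : Kˣ) * γ i j) • (x j * x i))
    (hyy : ∀ i j, i < j → y i * y j = ((γ i j : K)) • (y j * y i))
    (hxylt : ∀ i j, i < j → x i * y j = ((p j : K) * ((γ i j : Kˣ)⁻¹ : Kˣ)) • (y j * x i))
    (hxygt : ∀ i j, j < i → x i * y j = ((q j : K) * ((γ i j : Kˣ)⁻¹ : Kˣ)) • (y j * x i))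
    (hdiag : ∀ i, x i * y i - (q i : K) • (y i * x i) =
      ∑ l ∈ Finset.Iio i, ((q l : K) - (p l : K)) • (y l * x l))
    (i j : Fin n) : Commute (z p q x y i) (z p q x y j) := by
  have hyx : ∀ l, Commute (z p q x y j) (y l * x l) := fun l => by
    rcases le_or_gt l j with h | h
    · exact SkewCommute.commute_mul (q l).ne_zero
        (z_skewCommute_y_of_le hγanti hyy hxylt hxygt hdiag h)
        (z_skewCommute_x_of_le hγanti hxx hxylt hxygt hdiag h)
    · exact SkewCommute.commute_mul (p l).ne_zero (z_skewCommute_y_of_lt hyy hxylt h)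
        (z_skewCommute_x_of_lt hγanti hxx hxygt h)
  exact Commute.sum_left _ _ _ fun l _ => ((hyx l).symm.smul_left _)

end Kn

theorem Kn_z_normal_general
    (K : Type*) [Field K] (A : Type*) [Ring A] [Algebra K A] (n : ℕ)
    (p q : Fin n → Kˣ) (γ : Fin n → Fin n → Kˣ)
    (hγanti : ∀ i j, γ i j * γ j i = 1)
    (x y : Fin n → A)
    (hxx : ∀ i j, i < j → x i * x j = ((q i : K) * ((p j : Kˣ)⁻¹ : Kˣ) * γ i j) • (x j * x i))
    (hyy : ∀ i j, i < j → y i * y j = ((γ i j : K)) • (y j * y i))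
    (hxylt : ∀ i j, i < j → x i * y j = ((p j : K) * ((γ i j : Kˣ)⁻¹ : Kˣ)) • (y j * x i))
    (hxygt : ∀ i j, j < i → x i * y j = ((q j : K) * ((γ i j : Kˣ)⁻¹ : Kˣ)) • (y j * x i))
    (hdiag : ∀ i, x i * y i - (q i : K) • (y i * x i) =
      ∑ l ∈ Finset.Iio i, ((q l : K) - (p l : K)) • (y l * x l)) :
    (∀ i j : Fin n,
        (∑ l ∈ Finset.Iic i, ((q l : K) - (p l : K)) • (y l * x l)) *
          (∑ l ∈ Finset.Iic j, ((q l : K) - (p l : K)) • (y l * x l)) =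
        (∑ l ∈ Finset.Iic j, ((q l : K) - (p l : K)) • (y l * x l)) *
          (∑ l ∈ Finset.Iic i, ((q l : K) - (p l : K)) • (y l * x l))) ∧
    (∀ i j : Fin n, j < i →
        (∑ l ∈ Finset.Iic j, ((q l : K) - (p l : K)) • (y l * x l)) * y i =
          (p i : K) • (y i * ∑ l ∈ Finset.Iic j, ((q l : K) - (p l : K)) • (y l * x l))) ∧
    (∀ i j : Fin n, i ≤ j →
        (∑ l ∈ Finset.Iic j, ((q l : K) - (p l : K)) • (y l * x l)) * y i =
          (q i : K) • (y i * ∑ l ∈ Finset.Iic j, ((q l : K) - (p l : K)) • (y l * x l))) ∧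
    (∀ i j : Fin n, j < i →
        (∑ l ∈ Finset.Iic j, ((q l : K) - (p l : K)) • (y l * x l)) * x i =
          (((p i)⁻¹ : Kˣ) : K) • (x i * ∑ l ∈ Finset.Iic j, ((q l : K) - (p l : K)) • (y l * x l))) ∧
    (∀ i j : Fin n, i ≤ j →
        (∑ l ∈ Finset.Iic j, ((q l : K) - (p l : K)) • (y l * x l)) * x i =
          (((q i)⁻¹ : Kˣ) : K) • (x i * ∑ l ∈ Finset.Iic j, ((q l : K) - (p l : K)) • (y l * x l))) := by
  simp only [Units.val_inv_eq_inv_val]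
  exact ⟨fun i j => (Kn.z_commute hγanti hxx hyy hxylt hxygt hdiag i j).eq,
    fun _ _ => Kn.z_skewCommute_y_of_lt hyy hxylt,
    fun _ _ => Kn.z_skewCommute_y_of_le hγanti hyy hxylt hxygt hdiag,
    fun _ _ => Kn.z_skewCommute_x_of_lt hγanti hxx hxygt,
    fun _ _ => Kn.z_skewCommute_x_of_le hγanti hxx hxylt hxygt hdiag⟩

/-- In `K_n = K_{n,Γ}^{P,Q}(K)`, the elements `z_i = Σ_{l ≤ i} (q_l − p_l) y_l x_l`
commute with each other and skew-commute with the generators: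
`z_j y_i = p_i y_i z_j` (`j < i`), `z_j y_i = q_i y_i z_j` (`j ≥ i`),
`z_j x_i = p_i⁻¹ x_i z_j` (`j < i`), `z_j x_i = q_i⁻¹ x_i z_j` (`j ≥ i`).
In particular each `z_i` is normal. -/
theorem Kn_z_normal
    (K : Type*) [Field K] (A : Type*) [Ring A] [Algebra K A] (n : ℕ)
    (p q : Fin n → Kˣ) (γ : Fin n → Fin n → Kˣ)
    (hpq : ∀ i, p i ≠ q i)
    (hγdiag : ∀ i, γ i i = 1) (hγanti : ∀ i j, γ i j * γ j i = 1)
    (x y : Fin n → A)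
    (hxx : ∀ i j, i < j → x i * x j = ((q i : K) * ((p j : Kˣ)⁻¹ : Kˣ) * γ i j) • (x j * x i))
    (hyy : ∀ i j, i < j → y i * y j = ((γ i j : K)) • (y j * y i))
    (hxylt : ∀ i j, i < j → x i * y j = ((p j : K) * ((γ i j : Kˣ)⁻¹ : Kˣ)) • (y j * x i))
    (hxygt : ∀ i j, j < i → x i * y j = ((q j : K) * ((γ i j : Kˣ)⁻¹ : Kˣ)) • (y j * x i))
    (hdiag : ∀ i, x i * y i - (q i : K) • (y i * x i) =
      ∑ l ∈ Finset.Iio i, ((q l : K) - (p l : K)) • (y l * x l)) :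
    (∀ i j : Fin n,
        (∑ l ∈ Finset.Iic i, ((q l : K) - (p l : K)) • (y l * x l)) *
          (∑ l ∈ Finset.Iic j, ((q l : K) - (p l : K)) • (y l * x l)) =
        (∑ l ∈ Finset.Iic j, ((q l : K) - (p l : K)) • (y l * x l)) *
          (∑ l ∈ Finset.Iic i, ((q l : K) - (p l : K)) • (y l * x l))) ∧
    (∀ i j : Fin n, j < i →
        (∑ l ∈ Finset.Iic j, ((q l : K) - (p l : K)) • (y l * x l)) * y i =
          (p i : K) • (y i * ∑ l ∈ Finset.Iic j, ((q l : K) - (p l : K)) • (y l * x l))) ∧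
    (∀ i j : Fin n, i ≤ j →
        (∑ l ∈ Finset.Iic j, ((q l : K) - (p l : K)) • (y l * x l)) * y i =
          (q i : K) • (y i * ∑ l ∈ Finset.Iic j, ((q l : K) - (p l : K)) • (y l * x l))) ∧
    (∀ i j : Fin n, j < i →
        (∑ l ∈ Finset.Iic j, ((q l : K) - (p l : K)) • (y l * x l)) * x i =
          (((p i)⁻¹ : Kˣ) : K) • (x i * ∑ l ∈ Finset.Iic j, ((q l : K) - (p l : K)) • (y l * x l))) ∧
    (∀ i j : Fin n, i ≤ j →
        (∑ l ∈ Finset.Iic j, ((q l : K) - (p l : K)) • (y l * x l)) * x i =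
          (((q i)⁻¹ : Kˣ) : K) • (x i * ∑ l ∈ Finset.Iic j, ((q l : K) - (p l : K)) • (y l * x l))) :=
  Kn_z_normal_general K A n p q γ hγanti x y hxx hyy hxylt hxygt hdiag
end
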